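/- arXiv:1712.04017 — 2 statements merged into one kernel-verified Lean document; each statement's English description precedes it below -/
import Mathlib

section
/- For every ξ ∈ ℝⁿ, the linear operator Q₁(ξ) on the complex vector space of symmetric (n+1)×(n+1) complex matrices (H_{ab})_{0 ≤ a,b ≤ n}, defined by (Q₁(ξ)H)_{jk} = -2√(-1)(ξ_j H_{0k} + ξ_k H_{0j}) for 1 ≤ j,k ≤ n, (Q₁(ξ)H)_{j0} = -2√(-1)(ξ_j H_{00} - ξ_i H_{ij}) for 1 ≤ j ≤ n (summing i from 1 to n), and (Q₁(ξ)H)_{00} = 4√(-1) ξ_i H_{0i} (summing i from 1 to n), is diagonalizable with all eigenvalues real. -/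
/-!
On symmetric matrices, `Q₁(ξ)` is the commutator `H ↦ A H - H A` with
`A = 2i (e₀ ηᵀ - η e₀ᵀ)`, where `η = (0, ξ)`. The matrix `A` is Hermitian, so the commutator
with `A` is self-adjoint for the trace inner product `⟪X, Y⟫ = tr (Y Xᴴ)`; and `Aᵀ = -A`, so
it preserves symmetric matrices. The spectral theorem on that invariant subspace gives an
eigenbasis with real eigenvalues.
-/

open Matrix
open scoped ComplexOrder

noncomputable section

/-- The operator `Q₁(ξ)` on matrices, given entrywise:
`(Q₁(ξ)H)_{jk} = -2i(ξ_j H_{0k} + ξ_k H_{0j})`,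
`(Q₁(ξ)H)_{j0} = -2i(ξ_j H_{00} - ξ_i H_{ij})`,
`(Q₁(ξ)H)_{00} = 4i ξ_i H_{0i}`. -/
def Q1 (n : ℕ) (ξ : EuclideanSpace ℝ (Fin n))
    (A : Matrix (Fin (n + 1)) (Fin (n + 1)) ℂ) :
    Matrix (Fin (n + 1)) (Fin (n + 1)) ℂ :=
  Matrix.of fun a b =>
    Fin.cases
      (Fin.cases (4 * Complex.I * ∑ i : Fin n, (ξ i : ℂ) * A 0 i.succ)
        (fun j => -2 * Complex.I *
          ((ξ j : ℂ) * A 0 0 - ∑ i : Fin n, (ξ i : ℂ) * A i.succ j.succ)) b)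
      (fun j =>
        Fin.cases (-2 * Complex.I *
            ((ξ j : ℂ) * A 0 0 - ∑ i : Fin n, (ξ i : ℂ) * A i.succ j.succ))
          (fun k => -2 * Complex.I *
            ((ξ j : ℂ) * A 0 k.succ + (ξ k : ℂ) * A 0 j.succ)) b) a

theorem LinearMap.IsSymmetric.exists_eigenbasis_of_invariant {𝕜 E : Type*} [RCLike 𝕜]
    [NormedAddCommGroup E] [InnerProductSpace 𝕜 E] [FiniteDimensional 𝕜 E] {T : E →ₗ[𝕜] E}
    (hT : T.IsSymmetric) {S : Submodule 𝕜 E} (hS : ∀ v ∈ S, T v ∈ S) {N : ℕ}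
    (hN : Module.finrank 𝕜 S = N) :
    ∃ (v : Fin N → E) (μ : Fin N → ℝ), (∀ m, v m ∈ S) ∧ (∀ m, T (v m) = (μ m : 𝕜) • v m) ∧
      LinearIndependent 𝕜 v ∧ Submodule.span 𝕜 (Set.range v) = S := by
  have hTS := hT.restrict_invariant hS
  let b := hTS.eigenvectorBasis hN
  refine ⟨S.subtype ∘ b, hTS.eigenvalues hN, fun m => (b m).2,
    fun m => congrArg Subtype.val (hTS.apply_eigenvectorBasis hN m), ?_, ?_⟩
  · exact b.orthonormal.linearIndependent.map' S.subtype S.ker_subtype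
  · rw [Set.range_comp, Submodule.span_image, ← b.coe_toBasis, b.toBasis.span_eq,
      Submodule.map_top, Submodule.range_subtype]

namespace Matrix

variable {ι : Type*}

section Symmetric

variable {R : Type*}

variable (ι R) in
def symmetricSubmodule [CommSemiring R] : Submodule R (Matrix ι ι R) where
  carrier := {A | A.IsSymm}
  add_mem' := IsSymm.add
  zero_mem' := isSymm_zero
  smul_mem' c _ h := h.smul c

def symmetricSubmoduleEquivSym2 [CommSemiring R] :
    symmetricSubmodule ι R ≃ₗ[R] (Sym2 ι → R) where
  toFun A := Sym2.lift ⟨fun a b => A.1 a b, fun a b => A.2.apply b a⟩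
  map_add' A B := by ext z; induction z using Sym2.ind; rfl
  map_smul' c A := by ext z; induction z using Sym2.ind; rfl
  invFun f := ⟨of fun a b => f s(a, b), IsSymm.ext fun a b => by simp [Sym2.eq_swap]⟩
  left_inv A := rfl
  right_inv f := by ext z; induction z using Sym2.ind; rfl

theorem finrank_symmetricSubmodule [Fintype ι] [CommRing R] [StrongRankCondition R] :
    Module.finrank R (symmetricSubmodule ι R) = Fintype.card ι * (Fintype.card ι + 1) / 2 := by
  rw [symmetricSubmoduleEquivSym2.finrank_eq, Module.finrank_fintype_fun_eq_card, Sym2.card,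
    Nat.choose_two_right, Nat.add_sub_cancel, mul_comm]

theorem IsSymm.commutator_of_transpose_eq_neg [CommRing R] [Fintype ι] {A H : Matrix ι ι R}
    (hA : Aᵀ = -A) (hH : H.IsSymm) : (A * H - H * A).IsSymm := by
  rw [IsSymm, transpose_sub, transpose_mul, transpose_mul, hA, hH.eq]
  noncomm_ring

end Symmetric

section TraceInner

variable [Fintype ι] [DecidableEq ι] {𝕜 : Type*} [RCLike 𝕜]

abbrev traceNormedAddCommGroup : NormedAddCommGroup (Matrix ι ι 𝕜) :=
  toMatrixNormedAddCommGroup 1 PosDef.one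

attribute [local instance] traceNormedAddCommGroup

abbrev traceInnerProductSpace : InnerProductSpace 𝕜 (Matrix ι ι 𝕜) :=
  toMatrixInnerProductSpace 1 PosSemidef.one

attribute [local instance] traceInnerProductSpace

theorem isSymmetric_commutator_of_isHermitian {A : Matrix ι ι 𝕜} (hA : A.IsHermitian) :
    (LinearMap.mulLeft 𝕜 A - LinearMap.mulRight 𝕜 A).IsSymmetric := by
  intro x y
  show (y * 1 * (A * x - x * A)ᴴ).trace = ((A * y - y * A) * 1 * xᴴ).trace
  rw [conjTranspose_sub, conjTranspose_mul, conjTranspose_mul, hA.eq]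
  simp only [mul_one, sub_mul, mul_sub, trace_sub, ← mul_assoc]
  rw [trace_mul_cycle]

theorem exists_isSymm_eigenbasis_commutator {A : Matrix ι ι 𝕜} (hA : A.IsHermitian)
    (hAt : Aᵀ = -A) :
    ∃ (v : Fin (Fintype.card ι * (Fintype.card ι + 1) / 2) → Matrix ι ι 𝕜)
      (μ : Fin (Fintype.card ι * (Fintype.card ι + 1) / 2) → ℝ),
      (∀ m, (v m).IsSymm) ∧ (∀ m, A * v m - v m * A = (μ m : 𝕜) • v m) ∧
      LinearIndependent 𝕜 v ∧ Submodule.span 𝕜 (Set.range v) = symmetricSubmodule ι 𝕜 :=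
  (isSymmetric_commutator_of_isHermitian hA).exists_eigenbasis_of_invariant
    (fun _ hH => IsSymm.commutator_of_transpose_eq_neg hAt hH) finrank_symmetricSubmodule

end TraceInner

end Matrix

namespace Q1

variable {n : ℕ} (ξ : EuclideanSpace ℝ (Fin n))

def spatialVector : Fin (n + 1) → ℂ := Fin.cons 0 fun i => (ξ i : ℂ)

theorem star_spatialVector : star (spatialVector ξ) = spatialVector ξ := by
  ext i
  cases i using Fin.cases <;> simp [spatialVector]

def generator : Matrix (Fin (n + 1)) (Fin (n + 1)) ℂ :=
  (2 * Complex.I) •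
    (vecMulVec (Pi.single 0 1) (spatialVector ξ) - vecMulVec (spatialVector ξ) (Pi.single 0 1))

theorem generator_transpose : (generator ξ)ᵀ = -generator ξ := by
  simp only [generator, transpose_smul, transpose_sub, transpose_vecMulVec, smul_sub, neg_sub]

theorem generator_isHermitian : (generator ξ).IsHermitian := by
  rw [IsHermitian, generator, conjTranspose_smul, conjTranspose_sub, conjTranspose_vecMulVec,
    conjTranspose_vecMulVec, star_spatialVector, Pi.star_single, star_one, star_mul', star_ofNat,
    Complex.star_def, Complex.conj_I, mul_neg, neg_smul, ← smul_neg, neg_sub]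

theorem eq_commutator {H : Matrix (Fin (n + 1)) (Fin (n + 1)) ℂ} (hH : H.IsSymm) :
    Q1 n ξ H = generator ξ * H - H * generator ξ := by
  rw [generator, Matrix.smul_mul, Matrix.mul_smul, sub_mul, mul_sub, vecMulVec_mul, vecMulVec_mul,
    mul_vecMulVec, mul_vecMulVec]
  ext a b
  cases a using Fin.cases <;> cases b using Fin.cases <;>
    simp only [Q1, of_apply, Fin.cases_zero, Fin.cases_succ, single_vecMul, mulVec_single,
      one_smul, MulOpposite.op_one, row_apply, col_apply, Matrix.sub_apply, Matrix.smul_apply,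
      smul_eq_mul, vecMulVec_apply, Pi.single_eq_same, Pi.single_eq_of_ne (Fin.succ_ne_zero _),
      vecMul, mulVec, dotProduct, Fin.sum_univ_succ, spatialVector, Fin.cons_zero,
      Fin.cons_succ] <;>
    simp only [hH.apply _ 0, hH.apply (Fin.succ _) (Fin.succ _), mul_comm (H _ _)] <;>
    ring

end Q1

theorem statement6_general (n : ℕ) (ξ : EuclideanSpace ℝ (Fin n)) :
    ∃ (v : Fin ((n + 1) * (n + 2) / 2) → Matrix (Fin (n + 1)) (Fin (n + 1)) ℂ)
      (μ : Fin ((n + 1) * (n + 2) / 2) → ℝ),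
      (∀ m, (v m).IsSymm) ∧
      (∀ m, Q1 n ξ (v m) = (μ m : ℂ) • v m) ∧
      LinearIndependent ℂ v ∧
      (∀ A : Matrix (Fin (n + 1)) (Fin (n + 1)) ℂ, A.IsSymm →
        A ∈ Submodule.span ℂ (Set.range v)) := by
  have h := exists_isSymm_eigenbasis_commutator (Q1.generator_isHermitian ξ)
    (Q1.generator_transpose ξ)
  rw [Fintype.card_fin] at h
  obtain ⟨v, μ, hsymm, heigen, hli, hspan⟩ := h
  exact ⟨v, μ, hsymm, fun m => (Q1.eq_commutator ξ (hsymm m)).trans (heigen m), hli,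
    fun A hA => hspan ▸ hA⟩

/-- `Q₁(ξ)` is diagonalizable with real eigenvalues on the
space of symmetric matrices: there is a linearly independent family of
symmetric matrices, spanning all symmetric matrices, each of which is an
eigenvector of `Q₁(ξ)` with a real eigenvalue. -/
theorem statement6 (n : ℕ) (hn : 3 ≤ n) (ξ : EuclideanSpace ℝ (Fin n)) :
    ∃ (v : Fin ((n + 1) * (n + 2) / 2) → Matrix (Fin (n + 1)) (Fin (n + 1)) ℂ)
      (μ : Fin ((n + 1) * (n + 2) / 2) → ℝ),
      (∀ m, (v m).IsSymm) ∧
      (∀ m, Q1 n ξ (v m) = (μ m : ℂ) • v m) ∧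
      LinearIndependent ℂ v ∧
      (∀ A : Matrix (Fin (n + 1)) (Fin (n + 1)) ℂ, A.IsSymm →
        A ∈ Submodule.span ℂ (Set.range v)) :=
  statement6_general n ξ

end
end

section
/- Let n ≥ 1 be an integer. Suppose g : [0,∞) → ℝ is continuous with ∫₀^∞ |g(s)| e^{-s} ds < ∞, and suppose f : [0,∞) → ℝ is a twice differentiable solution of f''(t) + n f'(t) - (n+1) f(t) = g(t) for t ≥ 0, such that f(t) → 0 as t → ∞ and f' is bounded on [0,∞). Then f'(0) + (n+1) f(0) = 0 if and only if ∫₀^∞ g(s) e^{-s} ds = 0. -/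
/-!
Multiplying the equation by `e^{-t}` makes the left side exact:
`(e^{-t} (f' + (n+1) f))' = e^{-t} (f'' + n f' - (n+1) f) = e^{-t} g`, because `1` is a
characteristic root. The decay of `f` and the boundedness of `f'` make `e^{-t} (f' + (n+1) f)`
vanish at infinity, so `∫₀^∞ g(s) e^{-s} ds = -(f'(0) + (n+1) f(0))`.
-/

open MeasureTheory Filter Topology Set Real

lemma hasDerivAt_mul_exp_neg {u : ℝ → ℝ} {u' t : ℝ} (hu : HasDerivAt u u' t) :
    HasDerivAt (fun s => u s * exp (-s)) ((u' - u t) * exp (-t)) t := by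
  have hexp : HasDerivAt (fun s => exp (-s)) (-exp (-t)) t := by
    simpa using (hasDerivAt_neg t).exp
  exact (hu.fun_mul hexp).congr_deriv (by ring)

lemma integral_Ioi_sub_mul_exp_neg {u u' : ℝ → ℝ} {a : ℝ}
    (hu : ∀ t ∈ Ici a, HasDerivAt u (u' t) t)
    (hint : IntegrableOn (fun t => (u' t - u t) * exp (-t)) (Ioi a))
    (hlim : Tendsto (fun t => u t * exp (-t)) atTop (𝓝 0)) :
    ∫ t in Ioi a, (u' t - u t) * exp (-t) = -(u a * exp (-a)) := by
  rw [integral_Ioi_of_hasDerivAt_of_tendsto' (fun t ht => hasDerivAt_mul_exp_neg (hu t ht))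
    hint hlim, zero_sub]

lemma tendsto_mul_exp_neg_atTop_of_isBoundedUnder {u : ℝ → ℝ}
    (hu : IsBoundedUnder (· ≤ ·) atTop (fun t => ‖u t‖)) :
    Tendsto (fun t => u t * exp (-t)) atTop (𝓝 0) := by
  simpa only [mul_comm] using tendsto_exp_neg_atTop_nhds_zero.zero_mul_isBoundedUnder_le hu

lemma integrableOn_mul_exp_neg_of_abs {g : ℝ → ℝ} {s : Set ℝ} (hs : MeasurableSet s)
    (hg : ContinuousOn g s) (hgint : IntegrableOn (fun t => |g t| * exp (-t)) s) :
    IntegrableOn (fun t => g t * exp (-t)) s := by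
  refine hgint.mono' ((hg.mul (continuous_exp.comp continuous_neg).continuousOn)
    |>.aestronglyMeasurable hs) (Eventually.of_forall fun t => ?_)
  rw [norm_mul, norm_of_nonneg (exp_pos _).le, norm_eq_abs]

theorem statement14_general (n : ℕ) (g f f' f'' : ℝ → ℝ)
    (hg : ContinuousOn g (Set.Ici (0 : ℝ)))
    (hgint : IntegrableOn (fun s => |g s| * Real.exp (-s)) (Set.Ici (0 : ℝ)))
    (hf' : ∀ t ∈ Set.Ici (0 : ℝ), HasDerivAt f (f' t) t)
    (hf'' : ∀ t ∈ Set.Ici (0 : ℝ), HasDerivAt f' (f'' t) t)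
    (hode : ∀ t ∈ Set.Ici (0 : ℝ), f'' t + n * f' t - (n + 1) * f t = g t)
    (hlim : Filter.Tendsto f Filter.atTop (nhds 0))
    (hbdd : ∃ M : ℝ, ∀ t ∈ Set.Ici (0 : ℝ), |f' t| ≤ M) :
    f' 0 + (n + 1) * f 0 = 0 ↔ (∫ s in Set.Ici (0 : ℝ), g s * Real.exp (-s)) = 0 := by
  obtain ⟨M, hM⟩ := hbdd
  set w : ℝ → ℝ := fun t => f' t + (n + 1) * f t
  have hw : ∀ t ∈ Ici (0 : ℝ), HasDerivAt w (f'' t + (n + 1) * f' t) t := fun t ht =>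
    (hf'' t ht).add ((hf' t ht).const_mul _)
  have hw_sub : EqOn (fun t => (f'' t + (n + 1) * f' t - w t) * exp (-t))
      (fun t => g t * exp (-t)) (Ioi 0) := fun t ht => by
    simp only [w, ← hode t (mem_Ici_of_Ioi ht)]; ring
  have hw_bdd : IsBoundedUnder (· ≤ ·) atTop (fun t => ‖w t‖) := by
    have hf'_bdd : IsBoundedUnder (· ≤ ·) atTop (fun t => ‖f' t‖) :=
      ⟨M, eventually_map.2 <| (eventually_ge_atTop 0).mono fun t ht => hM t ht⟩
    exact isBoundedUnder_le_add hf'_bdd (hlim.const_mul _).norm.isBoundedUnder_le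
      |>.mono_le (Eventually.of_forall fun t => norm_add_le _ _)
  have hint := integrableOn_mul_exp_neg_of_abs measurableSet_Ici hg hgint
  have hval : ∫ s in Ici (0 : ℝ), g s * exp (-s) = -w 0 := by
    rw [integral_Ici_eq_integral_Ioi, ← setIntegral_congr_fun measurableSet_Ioi hw_sub,
      integral_Ioi_sub_mul_exp_neg hw
        ((hint.mono_set Ioi_subset_Ici_self).congr_fun hw_sub.symm measurableSet_Ioi)
        (tendsto_mul_exp_neg_atTop_of_isBoundedUnder hw_bdd)]
    simp
  rw [hval, neg_eq_zero]

theorem statement14 (n : ℕ) (hn : 1 ≤ n) (g f f' f'' : ℝ → ℝ)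
    (hg : ContinuousOn g (Set.Ici (0 : ℝ)))
    (hgint : IntegrableOn (fun s => |g s| * Real.exp (-s)) (Set.Ici (0 : ℝ)))
    (hf' : ∀ t ∈ Set.Ici (0 : ℝ), HasDerivAt f (f' t) t)
    (hf'' : ∀ t ∈ Set.Ici (0 : ℝ), HasDerivAt f' (f'' t) t)
    (hode : ∀ t ∈ Set.Ici (0 : ℝ), f'' t + n * f' t - (n + 1) * f t = g t)
    (hlim : Filter.Tendsto f Filter.atTop (nhds 0))
    (hbdd : ∃ M : ℝ, ∀ t ∈ Set.Ici (0 : ℝ), |f' t| ≤ M) :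
    f' 0 + (n + 1) * f 0 = 0 ↔ (∫ s in Set.Ici (0 : ℝ), g s * Real.exp (-s)) = 0 :=
  statement14_general n g f f' f'' hg hgint hf' hf'' hode hlim hbdd
end
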